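/- arXiv:1502.01483 — 4 statements merged into one kernel-verified Lean document; each statement's English description precedes it below -/
import Mathlib

section
/- For 0 < s < 1 and three distinct points x1, x2, x3 in R^d, the symmetrized quantity p_s(x1,x2,x3) = (1/2) * sum over the six permutations sigma of {1,2,3} of the scalar product of (x_{sigma(2)}-x_{sigma(1)})/|x_{sigma(2)}-x_{sigma(1)}|^{1+s} with (x_{sigma(3)}-x_{sigma(1)})/|x_{sigma(3)}-x_{sigma(1)}|^{1+s} is comparable, with constants depending only on s and d, to 1/max(|x1-x2|, |x1-x3|, |x2-x3|)^{2s}. -/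
/-!
Write `a ≤ b ≤ c` for the side lengths of the triangle. Summing the six kernel products vertex by
vertex with the law of cosines gives `p_s = N / (2 (a b c)^{1+s})`, where `N = ppermNum s a b c`.
The upper bound `N ≤ 4 a^{1+s} c²` is elementary. For the lower bound, `N` is a concave function
of `u = c²` (an affine function plus a positive multiple of `u^{(1+s)/2}` minus `u^{(3+s)/2}`), so
on `b ≤ c ≤ a + b` it is at least its value at an endpoint: at `c = b` it is at least
`a^{1+s} b²`, and at `c = a + b` it equals `2ab(a+b)(a^s + b^s - (a+b)^s)`, which concavity of
`t ↦ t^s` bounds below by `2(2 - 2^s) a^{1+s} b²`. Since `c ≤ 2b`, both bounds are comparable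
to `c^{-2s}`.
-/

open MeasureTheory Metric

/-- The `s`-Riesz kernel `K^s(x) = x / |x|^{1+s}` on `ℝ^d`. -/
noncomputable def rieszK (d : ℕ) (s : ℝ) (x : EuclideanSpace ℝ (Fin d)) :
    EuclideanSpace ℝ (Fin d) :=
  ‖x‖ ^ (-(1 + s)) • x

/-- The symmetrized permutation quantity
`p_s(x₁,x₂,x₃) = (1/2) ∑_σ K^s(x_{σ(2)}-x_{σ(1)}) · K^s(x_{σ(3)}-x_{σ(1)})`. -/
noncomputable def pperm (d : ℕ) (s : ℝ) (w : Fin 3 → EuclideanSpace ℝ (Fin d)) : ℝ :=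
  (1 / 2) * ∑ σ : Equiv.Perm (Fin 3),
    inner ℝ (rieszK d s (w (σ 1) - w (σ 0))) (rieszK d s (w (σ 2) - w (σ 0)))

open Real Set

theorem ConcaveOn.map_add_map_le_of_add_eq {S : Set ℝ} {f : ℝ → ℝ} (hf : ConcaveOn ℝ S f)
    {x y z w : ℝ} (hx : x ∈ S) (hw : w ∈ S) (hxy : x ≤ y) (hxz : x ≤ z) (hsum : x + w = y + z) :
    f x + f w ≤ f y + f z := by
  obtain rfl : z = x + w - y := by linarith
  obtain rfl | hxw := (show x ≤ w by linarith).eq_or_lt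
  · obtain rfl : y = x := by linarith
    simp
  set t := (y - x) / (w - x) with ht
  have ht0 : 0 ≤ t := div_nonneg (by linarith) (by linarith)
  have ht1 : 0 ≤ 1 - t := sub_nonneg.2 (div_le_one_of_le₀ (by linarith) (by linarith))
  have hy : (1 - t) * x + t * w = y := by
    rw [ht]; field_simp; ring
  have h1 := hf.2 hx hw ht1 ht0 (by ring)
  have h2 := hf.2 hx hw ht0 ht1 (by ring)
  simp only [smul_eq_mul, hy, show t * x + (1 - t) * w = x + w - y by linear_combination -hy]
    at h1 h2
  linear_combination h1 + h2

theorem rpow_add_le_two_rpow_sub_one_mul_add {p a b : ℝ} (hp0 : 0 ≤ p) (hp1 : p ≤ 1)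
    (ha : 0 ≤ a) (hab : a ≤ b) : (a + b) ^ p ≤ (2 ^ p - 1) * a ^ p + b ^ p := by
  have h := (concaveOn_rpow hp0 hp1).map_add_map_le_of_add_eq (x := a) (w := a + b) (y := b)
    (z := 2 * a) ha (by simp only [mem_Ici]; linarith) hab (by linarith) (by ring)
  rw [mul_rpow zero_le_two ha] at h
  linarith

theorem rpow_one_add_mul_rpow_one_sub {x : ℝ} (hx : 0 < x) (s : ℝ) :
    x ^ (1 + s) * x ^ (1 - s) = x ^ 2 := by
  rw [← rpow_add hx, show 1 + s + (1 - s) = 2 by ring, rpow_two]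

theorem rpow_neg_two_mul_mul_rpow_one_add {x : ℝ} (hx : 0 < x) (s : ℝ) :
    x ^ (-(2 * s)) * x ^ (1 + s) = x ^ (1 - s) := by
  rw [← rpow_add hx]
  ring_nf

theorem rpow_le_two_rpow_mul_rpow {x y t : ℝ} (hx : 0 ≤ x) (hxy : x ≤ 2 * y) (ht : 0 ≤ t) :
    x ^ t ≤ 2 ^ t * y ^ t := by
  rw [← mul_rpow zero_le_two (by linarith)]
  exact rpow_le_rpow hx hxy ht

noncomputable def ppermNum (s a b c : ℝ) : ℝ :=
  (b ^ 2 + c ^ 2 - a ^ 2) * a ^ (1 + s) + (a ^ 2 + c ^ 2 - b ^ 2) * b ^ (1 + s) +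
    (a ^ 2 + b ^ 2 - c ^ 2) * c ^ (1 + s)

noncomputable def ppermSides (s a b c : ℝ) : ℝ :=
  ppermNum s a b c / (2 * (a ^ (1 + s) * b ^ (1 + s) * c ^ (1 + s)))

section SideLengths

variable {s a b c : ℝ}

theorem concaveOn_ppermNum_sqrt (hs0 : 0 ≤ s) (hs1 : s ≤ 1) (a b : ℝ) :
    ConcaveOn ℝ (Ici 0) fun u ↦ ppermNum s a b √u := by
  have hG : ConcaveOn ℝ (Ici 0) fun u : ℝ ↦ (a ^ (1 + s) + b ^ (1 + s)) * u +
      (b ^ 2 - a ^ 2) * (a ^ (1 + s) - b ^ (1 + s)) +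
      (a ^ 2 + b ^ 2) * u ^ ((1 + s) / 2) - u ^ ((3 + s) / 2) :=
    ((((LinearMap.mulLeft ℝ (a ^ (1 + s) + b ^ (1 + s))).concaveOn (convex_Ici 0)).add_const _).add
      ((concaveOn_rpow (by linarith) (by linarith)).smul (by positivity))).sub
      (convexOn_rpow (by linarith))
  refine hG.congr fun u (hu : 0 ≤ u) ↦ ?_
  have hsqrt : √u ^ (1 + s) = u ^ ((1 + s) / 2) := by
    rw [sqrt_eq_rpow, ← rpow_mul hu]
    ring_nf
  have hpow : u ^ ((3 + s) / 2) = u * u ^ ((1 + s) / 2) := by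
    rw [show (3 + s) / 2 = 1 + (1 + s) / 2 by ring, rpow_add' hu (by linarith), rpow_one]
  simp only [ppermNum, sq_sqrt hu, hsqrt, hpow]
  ring

theorem ppermNum_self_right (s a b : ℝ) :
    ppermNum s a b b = a ^ (1 + s) * b ^ 2 + (b ^ 2 - a ^ 2) * a ^ (1 + s) +
      2 * a ^ 2 * b ^ (1 + s) := by
  rw [ppermNum]
  ring

theorem ppermNum_add_eq (ha : 0 < a) (hb : 0 < b) :
    ppermNum s a b (a + b) = 2 * a * b * (a + b) * (a ^ s + b ^ s - (a + b) ^ s) := by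
  simp only [ppermNum, rpow_add ha, rpow_add hb, rpow_add (add_pos ha hb), rpow_one]
  ring

theorem ppermNum_lower (hs0 : 0 ≤ s) (hs1 : s ≤ 1) (ha : 0 < a) (hab : a ≤ b) (hbc : b ≤ c)
    (hcab : c ≤ a + b) : (2 - 2 ^ s) * (a ^ (1 + s) * b ^ 2) ≤ ppermNum s a b c := by
  have hb : 0 < b := ha.trans_le hab
  have hA : 0 < a ^ (1 + s) := rpow_pos_of_pos ha _
  have h2s : 0 ≤ 2 - (2 : ℝ) ^ s := sub_nonneg.2 (rpow_le_self_of_one_le one_le_two hs1)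
  have hmin := (concaveOn_ppermNum_sqrt hs0 hs1 a b).min_le_of_mem_Icc
    (x := b ^ 2) (y := (a + b) ^ 2) (z := c ^ 2) (mem_Ici.2 (sq_nonneg _))
    (mem_Ici.2 (sq_nonneg _)) ⟨by gcongr, pow_le_pow_left₀ (hb.le.trans hbc) hcab 2⟩
  rw [sqrt_sq hb.le, sqrt_sq (hb.le.trans hbc), sqrt_sq (by linarith)] at hmin
  refine le_trans (le_min ?_ ?_) hmin
  · have h2s' : 1 ≤ (2 : ℝ) ^ s := one_le_rpow one_le_two hs0
    have hb2a2 : 0 ≤ (b ^ 2 - a ^ 2) * a ^ (1 + s) := mul_nonneg (by nlinarith) hA.le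
    have hB : 0 ≤ 2 * a ^ 2 * b ^ (1 + s) := by positivity
    rw [ppermNum_self_right]
    nlinarith [mul_pos hA (pow_pos hb 2)]
  · have hsub : (2 - 2 ^ s) * a ^ s ≤ a ^ s + b ^ s - (a + b) ^ s := by
      linarith [rpow_add_le_two_rpow_sub_one_mul_add hs0 hs1 ha.le hab]
    rw [ppermNum_add_eq ha hb, rpow_add ha, rpow_one]
    calc (2 - 2 ^ s) * (a * a ^ s * b ^ 2)
        ≤ 2 * a * b * (a + b) * ((2 - 2 ^ s) * a ^ s) := by
          have : 0 ≤ (2 - 2 ^ s) * a ^ s * a * b * (2 * a + b) := by positivity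
          nlinarith
      _ ≤ 2 * a * b * (a + b) * (a ^ s + b ^ s - (a + b) ^ s) := by gcongr

theorem ppermNum_upper (hs0 : 0 ≤ s) (hs1 : s ≤ 1) (ha : 0 < a) (hab : a ≤ b) (hbc : b ≤ c) :
    ppermNum s a b c ≤ 4 * (a ^ (1 + s) * c ^ 2) := by
  have hb : 0 < b := ha.trans_le hab
  have hc : 0 < c := hb.trans_le hbc
  have hA : 0 < a ^ (1 + s) := rpow_pos_of_pos ha _
  have hC : 0 < c ^ (1 + s) := rpow_pos_of_pos hc _
  have hBC : b ^ (1 + s) ≤ c ^ (1 + s) := rpow_le_rpow hb.le hbc (by linarith)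
  have hac : a ^ 2 * c ^ (1 + s) ≤ a ^ (1 + s) * c ^ 2 := by
    rw [← rpow_one_add_mul_rpow_one_sub ha s, ← rpow_one_add_mul_rpow_one_sub hc s]
    have : a ^ (1 - s) ≤ c ^ (1 - s) := rpow_le_rpow ha.le (hab.trans hbc) (by linarith)
    nlinarith [mul_pos hA hC]
  have hid : ppermNum s a b c = (b ^ 2 + c ^ 2 - a ^ 2) * a ^ (1 + s) +
      a ^ 2 * (b ^ (1 + s) + c ^ (1 + s)) - (c ^ 2 - b ^ 2) * (c ^ (1 + s) - b ^ (1 + s)) := by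
    rw [ppermNum]; ring
  have h1 : (b ^ 2 + c ^ 2 - a ^ 2) * a ^ (1 + s) ≤ 2 * c ^ 2 * a ^ (1 + s) := by
    gcongr; nlinarith
  have h2 : 0 ≤ (c ^ 2 - b ^ 2) * (c ^ (1 + s) - b ^ (1 + s)) :=
    mul_nonneg (by nlinarith) (by linarith)
  nlinarith [mul_le_mul_of_nonneg_left hBC (sq_nonneg a)]

theorem ppermSides_swap_left (s a b c : ℝ) : ppermSides s a b c = ppermSides s b a c := by
  simp only [ppermSides, ppermNum]
  ring

theorem ppermSides_swap_right (s a b c : ℝ) : ppermSides s a b c = ppermSides s a c b := by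
  simp only [ppermSides, ppermNum]
  ring

theorem ppermSides_lower_of_le (hs0 : 0 ≤ s) (hs1 : s ≤ 1) (ha : 0 < a) (hab : a ≤ b)
    (hbc : b ≤ c) (hcab : c ≤ a + b) :
    (2 - 2 ^ s) / 4 * c ^ (-(2 * s)) ≤ ppermSides s a b c := by
  have hb : 0 < b := ha.trans_le hab
  have hc : 0 < c := hb.trans_le hbc
  have h2s : 0 ≤ 2 - (2 : ℝ) ^ s := sub_nonneg.2 (rpow_le_self_of_one_le one_le_two hs1)
  have hcb : c ^ (1 - s) ≤ 2 * b ^ (1 - s) :=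
    (rpow_le_two_rpow_mul_rpow (y := b) hc.le (by linarith) (by linarith)).trans
      (by gcongr; exact rpow_le_self_of_one_le one_le_two (by linarith))
  rw [ppermSides, le_div_iff₀ (by positivity)]
  calc (2 - 2 ^ s) / 4 * c ^ (-(2 * s)) * (2 * (a ^ (1 + s) * b ^ (1 + s) * c ^ (1 + s)))
      = (2 - 2 ^ s) / 2 * (a ^ (1 + s) * b ^ (1 + s)) * c ^ (1 - s) := by
        rw [← rpow_neg_two_mul_mul_rpow_one_add hc]; ring
    _ ≤ (2 - 2 ^ s) / 2 * (a ^ (1 + s) * b ^ (1 + s)) * (2 * b ^ (1 - s)) := by gcongr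
    _ = (2 - 2 ^ s) * (a ^ (1 + s) * b ^ 2) := by
        rw [← rpow_one_add_mul_rpow_one_sub hb s]; ring
    _ ≤ ppermNum s a b c := ppermNum_lower hs0 hs1 ha hab hbc hcab

theorem ppermSides_upper_of_le (hs0 : 0 ≤ s) (hs1 : s ≤ 1) (ha : 0 < a) (hab : a ≤ b)
    (hbc : b ≤ c) (hcab : c ≤ a + b) : ppermSides s a b c ≤ 8 * c ^ (-(2 * s)) := by
  have hb : 0 < b := ha.trans_le hab
  have hc : 0 < c := hb.trans_le hbc
  have h4 : (2 : ℝ) ^ (1 + s) ≤ 4 := by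
    have := rpow_le_rpow_of_exponent_le (x := (2 : ℝ)) one_le_two (show 1 + s ≤ 2 by linarith)
    rwa [rpow_two, show (2 : ℝ) ^ 2 = 4 by norm_num] at this
  have hcb : c ^ (1 + s) ≤ 4 * b ^ (1 + s) :=
    (rpow_le_two_rpow_mul_rpow (y := b) hc.le (by linarith) (by linarith)).trans (by gcongr)
  rw [ppermSides, div_le_iff₀ (by positivity)]
  calc ppermNum s a b c ≤ 4 * (a ^ (1 + s) * c ^ 2) := ppermNum_upper hs0 hs1 ha hab hbc
    _ = 4 * a ^ (1 + s) * c ^ (1 + s) * c ^ (1 - s) := by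
        rw [← rpow_one_add_mul_rpow_one_sub hc s]; ring
    _ ≤ 4 * a ^ (1 + s) * (4 * b ^ (1 + s)) * c ^ (1 - s) := by gcongr
    _ = 8 * c ^ (-(2 * s)) * (2 * (a ^ (1 + s) * b ^ (1 + s) * c ^ (1 + s))) := by
        rw [← rpow_neg_two_mul_mul_rpow_one_add hc]; ring

theorem ppermSides_bounds_of_le_of_le (hs0 : 0 ≤ s) (hs1 : s ≤ 1) (ha : 0 < a) (hb : 0 < b)
    (hac : a ≤ c) (hbc : b ≤ c) (hcab : c ≤ a + b) :
    (2 - 2 ^ s) / 4 * c ^ (-(2 * s)) ≤ ppermSides s a b c ∧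
      ppermSides s a b c ≤ 8 * c ^ (-(2 * s)) := by
  rcases le_total a b with hab | hba
  · exact ⟨ppermSides_lower_of_le hs0 hs1 ha hab hbc hcab,
      ppermSides_upper_of_le hs0 hs1 ha hab hbc hcab⟩
  · rw [ppermSides_swap_left]
    exact ⟨ppermSides_lower_of_le hs0 hs1 hb hba hac (by linarith),
      ppermSides_upper_of_le hs0 hs1 hb hba hac (by linarith)⟩

theorem ppermSides_bounds (hs0 : 0 ≤ s) (hs1 : s ≤ 1) (ha : 0 < a) (hb : 0 < b) (hc : 0 < c)
    (ha' : a ≤ b + c) (hb' : b ≤ a + c) (hc' : c ≤ a + b) :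
    (2 - 2 ^ s) / 4 * max a (max b c) ^ (-(2 * s)) ≤ ppermSides s a b c ∧
      ppermSides s a b c ≤ 8 * max a (max b c) ^ (-(2 * s)) := by
  rcases le_total (max b c) a with hmax | hmax
  · rw [max_eq_left hmax, ppermSides_swap_left, ppermSides_swap_right]
    exact ppermSides_bounds_of_le_of_le hs0 hs1 hb hc (le_of_max_le_left hmax)
      (le_of_max_le_right hmax) ha'
  rw [max_eq_right hmax]
  rcases le_total b c with hbc | hcb
  · rw [max_eq_right hbc]
    exact ppermSides_bounds_of_le_of_le hs0 hs1 ha hb (by rwa [max_eq_right hbc] at hmax) hbc hc'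
  · rw [max_eq_left hcb, ppermSides_swap_right]
    exact ppermSides_bounds_of_le_of_le hs0 hs1 ha hc (by rwa [max_eq_left hcb] at hmax) hcb hb'

end SideLengths

theorem pperm_eq_sum_vertices (d : ℕ) (s : ℝ) (w : Fin 3 → EuclideanSpace ℝ (Fin d)) :
    pperm d s w =
      inner ℝ (rieszK d s (w 1 - w 0)) (rieszK d s (w 2 - w 0)) +
      inner ℝ (rieszK d s (w 0 - w 1)) (rieszK d s (w 2 - w 1)) +
      inner ℝ (rieszK d s (w 0 - w 2)) (rieszK d s (w 1 - w 2)) := by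
  have huniv : (Finset.univ : Finset (Equiv.Perm (Fin 3))) =
      {1, Equiv.swap 0 1, Equiv.swap 0 2, Equiv.swap 1 2,
       Equiv.swap 0 1 * Equiv.swap 1 2, Equiv.swap 1 2 * Equiv.swap 0 1} := by decide
  rw [pperm, huniv, Finset.sum_insert (by decide), Finset.sum_insert (by decide),
    Finset.sum_insert (by decide), Finset.sum_insert (by decide), Finset.sum_insert (by decide),
    Finset.sum_singleton]
  simp only [one_div, Fin.isValue, Equiv.Perm.coe_one, id_eq, Equiv.swap_apply_right,
    Equiv.swap_apply_left, Equiv.swap_apply_def, Fin.reduceEq, ↓reduceIte, one_ne_zero,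
    zero_ne_one, Equiv.Perm.coe_mul, Function.comp_apply]
  rw [real_inner_comm (rieszK d s (w 0 - w 1)), real_inner_comm (rieszK d s (w 1 - w 0)),
    real_inner_comm (rieszK d s (w 0 - w 2))]
  ring

theorem inner_rieszK_sub_sub (d : ℕ) (s : ℝ) (x y z : EuclideanSpace ℝ (Fin d)) :
    inner ℝ (rieszK d s (y - x)) (rieszK d s (z - x)) =
      (dist x y ^ 2 + dist x z ^ 2 - dist y z ^ 2) /
        (2 * (dist x y ^ (1 + s) * dist x z ^ (1 + s))) := by
  have hyz : dist y z = ‖(y - x) - (z - x)‖ := by rw [dist_eq_norm]; congr 1; abel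
  rw [rieszK, rieszK, real_inner_smul_left, real_inner_smul_right, dist_comm x y, dist_comm x z,
    dist_eq_norm y, dist_eq_norm z, hyz, rpow_neg (norm_nonneg _), rpow_neg (norm_nonneg _),
    norm_sub_sq_real (y - x) (z - x)]
  ring

theorem pperm_eq_ppermSides (d : ℕ) (s : ℝ) (w : Fin 3 → EuclideanSpace ℝ (Fin d))
    (hw : ∀ i j : Fin 3, i ≠ j → w i ≠ w j) :
    pperm d s w = ppermSides s (dist (w 0) (w 1)) (dist (w 0) (w 2)) (dist (w 1) (w 2)) := by
  have hA : 0 < dist (w 0) (w 1) ^ (1 + s) := rpow_pos_of_pos (dist_pos.2 (hw 0 1 (by decide))) _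
  have hB : 0 < dist (w 0) (w 2) ^ (1 + s) := rpow_pos_of_pos (dist_pos.2 (hw 0 2 (by decide))) _
  have hC : 0 < dist (w 1) (w 2) ^ (1 + s) := rpow_pos_of_pos (dist_pos.2 (hw 1 2 (by decide))) _
  rw [pperm_eq_sum_vertices, inner_rieszK_sub_sub, inner_rieszK_sub_sub, inner_rieszK_sub_sub,
    ppermSides, ppermNum]
  simp only [dist_comm (w 1) (w 0), dist_comm (w 2) (w 0), dist_comm (w 2) (w 1)]
  field_simp
  ring

theorem stmt0_general (d : ℕ) (s : ℝ) (hs : 0 < s) (hs1 : s < 1) :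
    ∃ c₁ c₂ : ℝ, 0 < c₁ ∧ 0 < c₂ ∧
      ∀ w : Fin 3 → EuclideanSpace ℝ (Fin d),
        (∀ i j : Fin 3, i ≠ j → w i ≠ w j) →
        c₁ * (max (dist (w 0) (w 1)) (max (dist (w 0) (w 2)) (dist (w 1) (w 2)))) ^ (-(2 * s))
            ≤ pperm d s w ∧
        pperm d s w ≤
          c₂ * (max (dist (w 0) (w 1)) (max (dist (w 0) (w 2)) (dist (w 1) (w 2)))) ^ (-(2 * s)) := by
  have h2s : (2 : ℝ) ^ s < 2 := rpow_lt_self_of_one_lt one_lt_two hs1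
  refine ⟨(2 - 2 ^ s) / 4, 8, by linarith, by norm_num, fun w hw ↦ ?_⟩
  rw [pperm_eq_ppermSides d s w hw]
  exact ppermSides_bounds hs.le hs1.le (dist_pos.2 (hw 0 1 (by decide)))
    (dist_pos.2 (hw 0 2 (by decide))) (dist_pos.2 (hw 1 2 (by decide)))
    (dist_triangle_right _ _ _) (dist_triangle _ _ _) (dist_triangle_left _ _ _)

/-- For `0 < s < 1`, the symmetrized quantity `p_s(x₁,x₂,x₃)` is comparable to
`max(|x₁-x₂|, |x₁-x₃|, |x₂-x₃|)^{-2s}`, with constants depending only on `s` and `d`. -/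
theorem stmt0 (d : ℕ) (hd : 0 < d) (s : ℝ) (hs : 0 < s) (hs1 : s < 1) :
    ∃ c₁ c₂ : ℝ, 0 < c₁ ∧ 0 < c₂ ∧
      ∀ w : Fin 3 → EuclideanSpace ℝ (Fin d),
        (∀ i j : Fin 3, i ≠ j → w i ≠ w j) →
        c₁ * (max (dist (w 0) (w 1)) (max (dist (w 0) (w 2)) (dist (w 1) (w 2)))) ^ (-(2 * s))
            ≤ pperm d s w ∧
        pperm d s w ≤
          c₂ * (max (dist (w 0) (w 1)) (max (dist (w 0) (w 2)) (dist (w 1) (w 2)))) ^ (-(2 * s)) :=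
  stmt0_general d s hs hs1
end

section
/- Let 0 < s < 1 and let mu have s-growth with constant c. Fix x in R^d and epsilon > 0. Then the double integral over the set {(y,z) : |y-x| > epsilon, |z-x| <= epsilon, |z-y| > epsilon} of 1/(|x-y|^s |z-y|^s) dmu(y) dmu(z) is at most C(s,d,c) * mu(B(x, epsilon)) / epsilon^s. -/
/-!
Off the diagonal the two distances are comparable: if `|z - x| ≤ ε < |z - y|` then
`|z - y| ≥ |x - y| / 2` (split according to whether `|y - x| ≥ 2ε`). So the integrand is at most
`2^s |x - y|^(-2s)`, which depends on `y` alone, and the double integral is bounded by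
`2^s μ(B̄(x, ε)) ∫_{|y - x| > ε} |x - y|^(-2s) dμ(y)`. Cutting the tail into dyadic annuli
`2ⁿε ≤ |y - x| < 2ⁿ⁺¹ε`, the `s`-growth bound makes the `n`-th annulus contribute
`O(ε^(-s) 2^(-ns))`, a convergent geometric series.
-/

open MeasureTheory Metric
open scoped ENNReal

theorem setLIntegral_prod_fst {α β : Type*} [MeasurableSpace α] [MeasurableSpace β]
    {μ : Measure α} {ν : Measure β} [SFinite μ] [SFinite ν] {f : α → ℝ≥0∞} (hf : Measurable f)
    (s : Set α) (t : Set β) :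
    ∫⁻ p in s ×ˢ t, f p.1 ∂μ.prod ν = (∫⁻ x in s, f x ∂μ) * ν t := by
  rw [setLIntegral_prod (fun p ↦ f p.1) (hf.comp measurable_fst).aemeasurable]
  simp_rw [setLIntegral_const]
  exact lintegral_mul_const _ hf

theorem half_dist_le_dist_of_dist_le_lt {X : Type*} [PseudoMetricSpace X] {x y z : X} {ε : ℝ}
    (hzx : dist z x ≤ ε) (hzy : ε < dist z y) : dist x y / 2 ≤ dist z y := by
  have := dist_triangle y z x
  rw [dist_comm x y, dist_comm z y] at *
  rcases le_or_gt (2 * ε) (dist y x) with h | h <;> linarith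

theorem one_div_rpow_mul_rpow_le {s a b : ℝ} (hs : 0 ≤ s) (ha : 0 < a) (hab : a / 2 ≤ b) :
    1 / (a ^ s * b ^ s) ≤ 2 ^ s * a ^ (-(2 * s)) := by
  have hb : (a / 2) ^ s ≤ b ^ s := Real.rpow_le_rpow (by positivity) hab hs
  calc 1 / (a ^ s * b ^ s) ≤ 1 / (a ^ s * (a / 2) ^ s) := by gcongr
    _ = 2 ^ s * a ^ (-(2 * s)) := by
      rw [Real.div_rpow ha.le zero_le_two, Real.rpow_neg ha.le, mul_comm 2 s,
        Real.rpow_mul ha.le, Real.rpow_two]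
      field_simp

section DyadicAnnuli

variable {X : Type*} [PseudoMetricSpace X]

def dyadicAnnulus (x : X) (ε : ℝ) (n : ℕ) : Set X :=
  {y | 2 ^ n * ε ≤ dist y x ∧ dist y x < 2 ^ (n + 1) * ε}

theorem setOf_lt_dist_subset_iUnion_dyadicAnnulus (x : X) {ε : ℝ} (hε : 0 < ε) :
    {y | ε < dist y x} ⊆ ⋃ n, dyadicAnnulus x ε n := by
  intro y hy
  obtain ⟨n, hn1, hn2⟩ := exists_nat_pow_near ((one_le_div hε).2 (le_of_lt hy)) one_lt_two
  exact Set.mem_iUnion.2 ⟨n, (le_div_iff₀ hε).1 hn1, (div_lt_iff₀ hε).1 hn2⟩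

variable [MeasurableSpace X] {μ : Measure X} {x : X} {s c t ε : ℝ}

theorem setLIntegral_dyadicAnnulus_dist_rpow_neg_le (ht : 0 ≤ t) (hε : 0 < ε)
    (hμ : ∀ r, 0 < r → μ (ball x r) ≤ ENNReal.ofReal (c * r ^ s)) (n : ℕ) :
    ∫⁻ y in dyadicAnnulus x ε n, ENNReal.ofReal (dist x y ^ (-t)) ∂μ
      ≤ ENNReal.ofReal (c * 2 ^ s * ε ^ (s - t) * ((2 : ℝ) ^ (s - t)) ^ n) := by
  have hpos : (0 : ℝ) < 2 ^ n * ε := by positivity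
  have hpow : ∀ (m : ℕ) (a : ℝ), ((2 : ℝ) ^ m) ^ a = (2 ^ a) ^ m := fun m a ↦ by
    rw [← Real.rpow_natCast_mul zero_le_two, mul_comm, Real.rpow_mul_natCast zero_le_two]
  calc ∫⁻ y in dyadicAnnulus x ε n, ENNReal.ofReal (dist x y ^ (-t)) ∂μ
      ≤ ∫⁻ _ in dyadicAnnulus x ε n, ENNReal.ofReal ((2 ^ n * ε) ^ (-t)) ∂μ := by
        refine setLIntegral_mono measurable_const fun y hy ↦ ENNReal.ofReal_le_ofReal ?_
        exact Real.rpow_le_rpow_of_nonpos hpos (dist_comm x y ▸ hy.1) (neg_nonpos.2 ht)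
    _ = ENNReal.ofReal ((2 ^ n * ε) ^ (-t)) * μ (dyadicAnnulus x ε n) := setLIntegral_const _ _
    _ ≤ ENNReal.ofReal ((2 ^ n * ε) ^ (-t)) * ENNReal.ofReal (c * (2 ^ (n + 1) * ε) ^ s) := by
        gcongr
        exact (measure_mono fun y hy ↦ mem_ball.2 hy.2).trans (hμ _ (by positivity))
    _ = ENNReal.ofReal (c * 2 ^ s * ε ^ (s - t) * ((2 : ℝ) ^ (s - t)) ^ n) := by
        rw [← ENNReal.ofReal_mul (by positivity)]
        congr 1
        rw [Real.mul_rpow (by positivity) hε.le, Real.mul_rpow (by positivity) hε.le,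
          hpow, hpow, pow_succ, Real.rpow_sub zero_lt_two, Real.rpow_sub hε,
          Real.rpow_neg zero_le_two, Real.rpow_neg hε.le, inv_pow, div_pow]
        field_simp

theorem lintegral_dist_rpow_neg_le_of_growth (hc : 0 ≤ c) (hs : 0 ≤ s) (hst : s < t)
    (hε : 0 < ε) (hμ : ∀ r, 0 < r → μ (ball x r) ≤ ENNReal.ofReal (c * r ^ s)) :
    ∫⁻ y in {y | ε < dist y x}, ENNReal.ofReal (dist x y ^ (-t)) ∂μ
      ≤ ENNReal.ofReal (c * 2 ^ s / (1 - 2 ^ (s - t)) * ε ^ (s - t)) := by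
  have hq0 : (0 : ℝ) ≤ 2 ^ (s - t) := by positivity
  have hq1 : (2 : ℝ) ^ (s - t) < 1 :=
    Real.rpow_lt_one_of_one_lt_of_neg one_lt_two (by linarith)
  calc ∫⁻ y in {y | ε < dist y x}, ENNReal.ofReal (dist x y ^ (-t)) ∂μ
      ≤ ∫⁻ y in ⋃ n, dyadicAnnulus x ε n, ENNReal.ofReal (dist x y ^ (-t)) ∂μ :=
        lintegral_mono_set (setOf_lt_dist_subset_iUnion_dyadicAnnulus x hε)
    _ ≤ ∑' n, ∫⁻ y in dyadicAnnulus x ε n, ENNReal.ofReal (dist x y ^ (-t)) ∂μ :=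
        lintegral_iUnion_le _ _
    _ ≤ ∑' n : ℕ, ENNReal.ofReal (c * 2 ^ s * ε ^ (s - t) * ((2 : ℝ) ^ (s - t)) ^ n) :=
        ENNReal.tsum_le_tsum
          (setLIntegral_dyadicAnnulus_dist_rpow_neg_le (by linarith) hε hμ)
    _ = ENNReal.ofReal (c * 2 ^ s / (1 - 2 ^ (s - t)) * ε ^ (s - t)) := by
        rw [← ENNReal.ofReal_tsum_of_nonneg (fun n ↦ by positivity)
          ((summable_geometric_of_lt_one hq0 hq1).mul_left _),
          tsum_mul_left, tsum_geometric_of_lt_one hq0 hq1]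
        ring_nf

end DyadicAnnuli

theorem stmt4_general (d : ℕ) (s c : ℝ) (hs : 0 < s) (hc : 0 < c) :
    ∃ C : ℝ, 0 < C ∧
      ∀ μ : Measure (EuclideanSpace ℝ (Fin d)), SFinite μ →
        (∀ (x : EuclideanSpace ℝ (Fin d)) (r : ℝ), 0 < r →
          μ (ball x r) ≤ ENNReal.ofReal (c * r ^ s)) →
        ∀ (x : EuclideanSpace ℝ (Fin d)) (ε : ℝ), 0 < ε →
          ∫⁻ p in {p : EuclideanSpace ℝ (Fin d) × EuclideanSpace ℝ (Fin d) |
              ε < dist p.1 x ∧ dist p.2 x ≤ ε ∧ ε < dist p.2 p.1},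
              ENNReal.ofReal (1 / (dist x p.1 ^ s * dist p.2 p.1 ^ s)) ∂(μ.prod μ)
            ≤ ENNReal.ofReal (C * ε ^ (-s)) * μ (closedBall x ε) := by
  have hq : (2 : ℝ) ^ (s - 2 * s) < 1 :=
    Real.rpow_lt_one_of_one_lt_of_neg one_lt_two (by linarith)
  refine ⟨2 ^ s * (c * 2 ^ s / (1 - 2 ^ (s - 2 * s))), by have := sub_pos.2 hq; positivity, ?_⟩
  intro μ _ hμ x ε hε
  have hkernel : Measurable fun y : EuclideanSpace ℝ (Fin d) ↦
      ENNReal.ofReal (2 ^ s * dist x y ^ (-(2 * s))) := by fun_prop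
  calc ∫⁻ p in {p : EuclideanSpace ℝ (Fin d) × EuclideanSpace ℝ (Fin d) |
          ε < dist p.1 x ∧ dist p.2 x ≤ ε ∧ ε < dist p.2 p.1},
          ENNReal.ofReal (1 / (dist x p.1 ^ s * dist p.2 p.1 ^ s)) ∂(μ.prod μ)
      ≤ ∫⁻ p in {p : EuclideanSpace ℝ (Fin d) × EuclideanSpace ℝ (Fin d) |
          ε < dist p.1 x ∧ dist p.2 x ≤ ε ∧ ε < dist p.2 p.1},
          ENNReal.ofReal (2 ^ s * dist x p.1 ^ (-(2 * s))) ∂(μ.prod μ) := by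
        refine setLIntegral_mono (hkernel.comp measurable_fst) ?_
        rintro p ⟨hy, hz, hzy⟩
        refine ENNReal.ofReal_le_ofReal (one_div_rpow_mul_rpow_le hs.le ?_ ?_)
        · exact dist_comm x p.1 ▸ hε.trans hy
        · exact half_dist_le_dist_of_dist_le_lt hz hzy
    _ ≤ ∫⁻ p in {y | ε < dist y x} ×ˢ closedBall x ε,
          ENNReal.ofReal (2 ^ s * dist x p.1 ^ (-(2 * s))) ∂(μ.prod μ) :=
        lintegral_mono_set fun p ⟨hy, hz, _⟩ ↦ ⟨hy, mem_closedBall.2 hz⟩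
    _ = ENNReal.ofReal (2 ^ s) * (∫⁻ y in {y | ε < dist y x},
          ENNReal.ofReal (dist x y ^ (-(2 * s))) ∂μ) * μ (closedBall x ε) := by
        rw [setLIntegral_prod_fst hkernel]
        simp_rw [ENNReal.ofReal_mul (by positivity : (0 : ℝ) ≤ 2 ^ s)]
        rw [lintegral_const_mul' _ _ ENNReal.ofReal_ne_top]
    _ ≤ ENNReal.ofReal (2 ^ s) * ENNReal.ofReal (c * 2 ^ s / (1 - 2 ^ (s - 2 * s)) *
          ε ^ (s - 2 * s)) * μ (closedBall x ε) := by
        gcongr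
        exact lintegral_dist_rpow_neg_le_of_growth hc.le hs.le (by linarith) hε (hμ x)
    _ = _ := by
        rw [← ENNReal.ofReal_mul (by positivity), ← mul_assoc]
        ring_nf

/-- If `μ` has `s`-growth with constant `c`, then for every `x` and `ε > 0`, the double
integral over `{(y,z) : |y-x| > ε, |z-x| ≤ ε, |z-y| > ε}` of `1/(|x-y|^s |z-y|^s)`
is at most `C(s,d,c) μ(B(x,ε)) / ε^s`. -/
theorem stmt4 (d : ℕ) (s c : ℝ) (hs : 0 < s) (hs1 : s < 1) (hc : 0 < c) :
    ∃ C : ℝ, 0 < C ∧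
      ∀ μ : Measure (EuclideanSpace ℝ (Fin d)), SFinite μ →
        (∀ (x : EuclideanSpace ℝ (Fin d)) (r : ℝ), 0 < r →
          μ (ball x r) ≤ ENNReal.ofReal (c * r ^ s)) →
        ∀ (x : EuclideanSpace ℝ (Fin d)) (ε : ℝ), 0 < ε →
          ∫⁻ p in {p : EuclideanSpace ℝ (Fin d) × EuclideanSpace ℝ (Fin d) |
              ε < dist p.1 x ∧ dist p.2 x ≤ ε ∧ ε < dist p.2 p.1},
              ENNReal.ofReal (1 / (dist x p.1 ^ s * dist p.2 p.1 ^ s)) ∂(μ.prod μ)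
            ≤ ENNReal.ofReal (C * ε ^ (-s)) * μ (closedBall x ε) :=
  stmt4_general d s c hs hc
end

section
/- Let 0 < s < 1 and let mu be a Radon measure with s-growth on R^d. Let E be a bounded measurable set and epsilon > 0. Then the iterated integral int int_{y in E, |y-x| > epsilon} mu(B(y, epsilon)) / |y - x|^{2s} dmu(y) dmu(x) <= C(s,c) * int_{y in E} mu(B(y, epsilon)) / epsilon^s dmu(y). Moreover, if additionally lim_{r -> 0} mu(B(y,r))/r^s = 0 for mu-a.e. y and mu(E) < infinity, the right-hand side tends to 0 as epsilon -> 0. -/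
/-!
Split the region `dist y x > ε` into the dyadic annuli `2ᵏε ≤ dist y x < 2ᵏ⁺¹ε`. On the `k`-th one
the kernel is at most `(2ᵏε)^(-2s)` and, by `s`-growth, the annulus has measure at most
`c (2ᵏ⁺¹ε)^s`, so summing the geometric series `∑ (2^(-s))ᵏ` gives
`∫_{dist y x > ε} dist y x ^ (-2s) dμ(x) ≤ C ε^(-s)` uniformly in `y`. Tonelli then turns the double
integral into `∫_E μ(B(y,ε)) · (this inner integral) dμ(y)`. For the limit, `s`-growth bounds the
integrand `μ(B(y,ε)) ε^(-s)` by `c`, which is integrable on `E` when `μ E < ∞`, so dominated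
convergence applies.
-/

open MeasureTheory Metric Filter
open ENNReal (ofReal)
open scoped ENNReal Topology

lemma two_pow_mul_rpow_neg_two_mul_mul_rpow_eq (s c : ℝ) {ε : ℝ} (hε : 0 < ε) (k : ℕ) :
    (2 ^ k * ε) ^ (-(2 * s)) * (c * (2 ^ (k + 1) * ε) ^ s)
      = c * 2 ^ s * ε ^ (-s) * ((2 : ℝ) ^ (-s)) ^ k := by
  set t : ℝ := 2 ^ k * ε with ht
  have ht0 : 0 < t := by positivity
  have hdouble : (2 : ℝ) ^ (k + 1) * ε = 2 * t := by rw [ht, pow_succ]; ring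
  have hsplit : t ^ (-(2 * s)) * t ^ s = t ^ (-s) := by rw [← Real.rpow_add ht0]; ring_nf
  have ht_rpow : t ^ (-s) = ((2 : ℝ) ^ (-s)) ^ k * ε ^ (-s) := by
    rw [ht, Real.mul_rpow (by positivity) hε.le, Real.rpow_pow_comm zero_le_two]
  rw [hdouble, Real.mul_rpow zero_le_two ht0.le]
  calc t ^ (-(2 * s)) * (c * (2 ^ s * t ^ s)) = c * 2 ^ s * (t ^ (-(2 * s)) * t ^ s) := by ring
    _ = _ := by rw [hsplit, ht_rpow]; ring

lemma one_sub_two_rpow_neg_pos {s : ℝ} (hs : 0 < s) : 0 < 1 - (2 : ℝ) ^ (-s) :=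
  sub_pos.2 (Real.rpow_lt_one_of_one_lt_of_neg one_lt_two (neg_neg_of_pos hs))

lemma mul_ofReal_rpow_neg_eq_div (a : ℝ≥0∞) {r : ℝ} (hr : 0 < r) (s : ℝ) :
    a * ofReal (r ^ (-s)) = a / ofReal (r ^ s) := by
  rw [Real.rpow_neg hr.le, ENNReal.ofReal_inv_of_pos (by positivity), div_eq_mul_inv]

section Growth

variable {X : Type*} [PseudoMetricSpace X]

lemma setOf_lt_dist_subset_iUnion_annulus (y : X) {ε : ℝ} (hε : 0 < ε) :
    {x | ε < dist y x} ⊆ ⋃ k : ℕ, ball y (2 ^ (k + 1) * ε) \ ball y (2 ^ k * ε) := by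
  intro x hx
  obtain ⟨k, hk_le, hk_lt⟩ :=
    exists_nat_pow_near ((one_le_div hε).2 hx.le) one_lt_two
  refine Set.mem_iUnion.2 ⟨k, ?_, ?_⟩
  · rw [mem_ball, dist_comm]; exact (div_lt_iff₀ hε).1 hk_lt
  · rw [mem_ball, dist_comm, not_lt]; exact (le_div_iff₀ hε).1 hk_le

variable [MeasurableSpace X] {μ : Measure X} {s c : ℝ}

def HasGrowth (μ : Measure X) (s c : ℝ) : Prop :=
  ∀ (x : X) (r : ℝ), 0 < r → μ (ball x r) ≤ ofReal (c * r ^ s)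

lemma HasGrowth.isLocallyFiniteMeasure (hμ : HasGrowth μ s c) : IsLocallyFiniteMeasure μ :=
  ⟨fun x => ⟨ball x 1, ball_mem_nhds x one_pos, (hμ x 1 one_pos).trans_lt ENNReal.ofReal_lt_top⟩⟩

lemma HasGrowth.measure_ball_mul_rpow_neg_le (hμ : HasGrowth μ s c) (y : X) {r : ℝ} (hr : 0 < r) :
    μ (ball y r) * ofReal (r ^ (-s)) ≤ ofReal c := by
  calc μ (ball y r) * ofReal (r ^ (-s)) ≤ ofReal (c * r ^ s) * ofReal (r ^ (-s)) := by
        gcongr; exact hμ y r hr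
    _ = ofReal c := by
        rw [← ENNReal.ofReal_mul' (by positivity), mul_assoc, ← Real.rpow_add hr, add_neg_cancel,
          Real.rpow_zero, mul_one]

variable [OpensMeasurableSpace X]

lemma setLIntegral_annulus_dist_rpow_le (hμ : HasGrowth μ s c) (hs : 0 ≤ s) (y : X) {ε : ℝ}
    (hε : 0 < ε) (k : ℕ) :
    ∫⁻ x in ball y (2 ^ (k + 1) * ε) \ ball y (2 ^ k * ε), ofReal (dist y x ^ (-(2 * s))) ∂μ
      ≤ ofReal (c * 2 ^ s * ε ^ (-s)) * ofReal ((2 : ℝ) ^ (-s)) ^ k := by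
  have hinner : 0 < (2 : ℝ) ^ k * ε := by positivity
  calc ∫⁻ x in ball y (2 ^ (k + 1) * ε) \ ball y (2 ^ k * ε), ofReal (dist y x ^ (-(2 * s))) ∂μ
      ≤ ∫⁻ _ in ball y (2 ^ (k + 1) * ε) \ ball y (2 ^ k * ε),
          ofReal ((2 ^ k * ε) ^ (-(2 * s))) ∂μ := by
        refine setLIntegral_mono' (measurableSet_ball.diff measurableSet_ball) fun x hx => ?_
        have hx' : 2 ^ k * ε ≤ dist y x := by
          rw [dist_comm]; exact not_lt.1 hx.2
        exact ENNReal.ofReal_le_ofReal (Real.rpow_le_rpow_of_nonpos hinner hx' (by linarith))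
    _ ≤ ofReal ((2 ^ k * ε) ^ (-(2 * s))) * μ (ball y (2 ^ (k + 1) * ε)) := by
        rw [setLIntegral_const]; gcongr; exact Set.sdiff_subset
    _ ≤ ofReal ((2 ^ k * ε) ^ (-(2 * s))) * ofReal (c * (2 ^ (k + 1) * ε) ^ s) := by
        gcongr; exact hμ y _ (by positivity)
    _ = ofReal (c * 2 ^ s * ε ^ (-s)) * ofReal ((2 : ℝ) ^ (-s)) ^ k := by
        rw [← ENNReal.ofReal_mul (by positivity), two_pow_mul_rpow_neg_two_mul_mul_rpow_eq s c hε,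
          ENNReal.ofReal_mul' (by positivity), ENNReal.ofReal_pow (by positivity)]

lemma setLIntegral_lt_dist_rpow_le (hμ : HasGrowth μ s c) (hs : 0 < s) (y : X) {ε : ℝ}
    (hε : 0 < ε) :
    ∫⁻ x in {x | ε < dist y x}, ofReal (dist y x ^ (-(2 * s))) ∂μ
      ≤ ofReal (c * 2 ^ s * (1 - 2 ^ (-s))⁻¹) * ofReal (ε ^ (-s)) := by
  have hgap := one_sub_two_rpow_neg_pos hs
  calc ∫⁻ x in {x | ε < dist y x}, ofReal (dist y x ^ (-(2 * s))) ∂μ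
      ≤ ∫⁻ x in ⋃ k : ℕ, ball y (2 ^ (k + 1) * ε) \ ball y (2 ^ k * ε),
          ofReal (dist y x ^ (-(2 * s))) ∂μ :=
        lintegral_mono_set (setOf_lt_dist_subset_iUnion_annulus y hε)
    _ ≤ ∑' k : ℕ, ∫⁻ x in ball y (2 ^ (k + 1) * ε) \ ball y (2 ^ k * ε),
          ofReal (dist y x ^ (-(2 * s))) ∂μ :=
        lintegral_iUnion_le _ _
    _ ≤ ∑' k : ℕ, ofReal (c * 2 ^ s * ε ^ (-s)) * ofReal ((2 : ℝ) ^ (-s)) ^ k :=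
        ENNReal.tsum_le_tsum fun k => setLIntegral_annulus_dist_rpow_le hμ hs.le y hε k
    _ = ofReal (c * 2 ^ s * ε ^ (-s)) * (1 - ofReal ((2 : ℝ) ^ (-s)))⁻¹ := by
        rw [ENNReal.tsum_mul_left, ENNReal.tsum_geometric]
    _ = ofReal (c * 2 ^ s * (1 - 2 ^ (-s))⁻¹) * ofReal (ε ^ (-s)) := by
        rw [← ENNReal.ofReal_one, ← ENNReal.ofReal_sub _ (by positivity),
          ← ENNReal.ofReal_inv_of_pos hgap,
          ← ENNReal.ofReal_mul' (by positivity), ← ENNReal.ofReal_mul' (by positivity)]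
        ring_nf

variable [SecondCountableTopology X]

lemma measurable_measure_ball [SFinite μ] (r : ℝ) : Measurable fun y => μ (ball y r) := by
  have hU : MeasurableSet {p : X × X | dist p.2 p.1 < r} :=
    measurableSet_lt (measurable_snd.dist measurable_fst) measurable_const
  exact measurable_measure_prodMk_left hU

lemma lintegral_setLIntegral_lt_dist_rpow_le [SFinite μ] (hμ : HasGrowth μ s c) (hs : 0 < s)
    {E : Set X} {f : X → ℝ≥0∞} (hf : Measurable f) {ε : ℝ} (hε : 0 < ε) :
    ∫⁻ x, ∫⁻ y in E ∩ {y | ε < dist y x}, f y * ofReal (dist y x ^ (-(2 * s))) ∂μ ∂μ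
      ≤ ofReal (c * 2 ^ s * (1 - 2 ^ (-s))⁻¹) * ∫⁻ y in E, f y * ofReal (ε ^ (-s)) ∂μ := by
  set K : X → X → ℝ≥0∞ := fun x y =>
    if ε < dist y x then f y * ofReal (dist y x ^ (-(2 * s))) else 0
  have hK : Measurable (Function.uncurry K) := by
    refine Measurable.ite (measurableSet_lt measurable_const (measurable_snd.dist measurable_fst))
      ((hf.comp measurable_snd).mul ?_) measurable_const
    exact ((measurable_snd.dist measurable_fst).pow_const _).ennreal_ofReal
  have hrestrict : ∀ x, ∫⁻ y in E ∩ {y | ε < dist y x}, f y * ofReal (dist y x ^ (-(2 * s))) ∂μ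
      = ∫⁻ y in E, K x y ∂μ := by
    intro x
    have hS : MeasurableSet {y | ε < dist y x} :=
      measurableSet_lt measurable_const (measurable_id.dist measurable_const)
    rw [Set.inter_comm, ← Measure.restrict_restrict hS, ← lintegral_indicator hS]
    rfl
  have hslice : ∀ y, ∫⁻ x, K x y ∂μ
      ≤ ofReal (c * 2 ^ s * (1 - 2 ^ (-s))⁻¹) * (f y * ofReal (ε ^ (-s))) := by
    intro y
    have hS : MeasurableSet {x | ε < dist y x} :=
      measurableSet_lt measurable_const (measurable_const.dist measurable_id)
    calc ∫⁻ x, K x y ∂μ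
        = ∫⁻ x in {x | ε < dist y x}, f y * ofReal (dist y x ^ (-(2 * s))) ∂μ := by
          rw [← lintegral_indicator hS]; rfl
      _ = f y * ∫⁻ x in {x | ε < dist y x}, ofReal (dist y x ^ (-(2 * s))) ∂μ :=
          lintegral_const_mul _
            ((measurable_const.dist measurable_id).pow_const _).ennreal_ofReal
      _ ≤ f y * (ofReal (c * 2 ^ s * (1 - 2 ^ (-s))⁻¹) * ofReal (ε ^ (-s))) := by
          gcongr; exact setLIntegral_lt_dist_rpow_le hμ hs y hε
      _ = _ := by ring
  calc ∫⁻ x, ∫⁻ y in E ∩ {y | ε < dist y x}, f y * ofReal (dist y x ^ (-(2 * s))) ∂μ ∂μ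
      = ∫⁻ y in E, ∫⁻ x, K x y ∂μ ∂μ := by
        simp_rw [hrestrict]; exact lintegral_lintegral_swap hK.aemeasurable
    _ ≤ ∫⁻ y in E, ofReal (c * 2 ^ s * (1 - 2 ^ (-s))⁻¹) * (f y * ofReal (ε ^ (-s))) ∂μ :=
        lintegral_mono hslice
    _ = _ := lintegral_const_mul' _ _ ENNReal.ofReal_ne_top

lemma tendsto_setLIntegral_measure_ball_mul_rpow_neg [SFinite μ] (hμ : HasGrowth μ s c)
    {E : Set X} (hE : μ E < ⊤)
    (hlim : ∀ᵐ y ∂μ, Tendsto (fun r : ℝ => μ (ball y r) / ofReal (r ^ s)) (𝓝[>] 0) (𝓝 0)) :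
    Tendsto (fun ε : ℝ => ∫⁻ y in E, μ (ball y ε) * ofReal (ε ^ (-s)) ∂μ) (𝓝[>] 0) (𝓝 0) := by
  have hdom : ∀ᶠ ε in 𝓝[>] (0 : ℝ), ∀ᵐ y ∂μ.restrict E,
      μ (ball y ε) * ofReal (ε ^ (-s)) ≤ ofReal c := by
    filter_upwards [self_mem_nhdsWithin] with ε hε
    exact .of_forall fun y => hμ.measure_ball_mul_rpow_neg_le y hε
  have hpointwise : ∀ᵐ y ∂μ.restrict E,
      Tendsto (fun ε : ℝ => μ (ball y ε) * ofReal (ε ^ (-s))) (𝓝[>] 0) (𝓝 0) := by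
    refine ae_restrict_of_ae (hlim.mono fun y hy => hy.congr' ?_)
    filter_upwards [self_mem_nhdsWithin] with r hr
    exact (mul_ofReal_rpow_neg_eq_div _ hr s).symm
  simpa using tendsto_lintegral_filter_of_dominated_convergence (fun _ => ofReal c)
    (.of_forall fun ε => (measurable_measure_ball ε).mul_const _) hdom
    (by simpa using ENNReal.mul_ne_top ENNReal.ofReal_ne_top hE.ne) hpointwise

end Growth

theorem stmt5_general (d : ℕ) (s c : ℝ) (hs : 0 < s) (hc : 0 < c) :
    ∃ C : ℝ, 0 < C ∧
      ∀ μ : Measure (EuclideanSpace ℝ (Fin d)),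
        (∀ (x : EuclideanSpace ℝ (Fin d)) (r : ℝ), 0 < r →
          μ (ball x r) ≤ ENNReal.ofReal (c * r ^ s)) →
        ∀ E : Set (EuclideanSpace ℝ (Fin d)), MeasurableSet E → Bornology.IsBounded E →
          (∀ ε : ℝ, 0 < ε →
            ∫⁻ x, ∫⁻ y in E ∩ {y | ε < dist y x},
                μ (ball y ε) * ENNReal.ofReal (dist y x ^ (-(2 * s))) ∂μ ∂μ
              ≤ ENNReal.ofReal C *
                  ∫⁻ y in E, μ (ball y ε) * ENNReal.ofReal (ε ^ (-s)) ∂μ) ∧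
          ((∀ᵐ y ∂μ, Tendsto (fun r : ℝ => μ (ball y r) / ENNReal.ofReal (r ^ s))
                (nhdsWithin 0 (Set.Ioi 0)) (nhds 0)) →
            μ E < ⊤ →
            Tendsto (fun ε : ℝ => ∫⁻ y in E, μ (ball y ε) * ENNReal.ofReal (ε ^ (-s)) ∂μ)
              (nhdsWithin 0 (Set.Ioi 0)) (nhds 0)) := by
  have hgap := one_sub_two_rpow_neg_pos hs
  refine ⟨c * 2 ^ s * (1 - 2 ^ (-s))⁻¹, by positivity, fun μ (hμ : HasGrowth μ s c) E _ _ => ?_⟩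
  have := hμ.isLocallyFiniteMeasure
  exact ⟨fun ε hε => lintegral_setLIntegral_lt_dist_rpow_le hμ hs (measurable_measure_ball ε) hε,
    fun hlim hE => tendsto_setLIntegral_measure_ball_mul_rpow_neg hμ hE hlim⟩

/-- Let `μ` have `s`-growth. For a bounded set `E` and `ε > 0`,
`∫∫_{y ∈ E, |y-x|>ε} μ(B(y,ε))/|y-x|^{2s} dμ(y) dμ(x) ≤ C(s,c) ∫_{y∈E} μ(B(y,ε))/ε^s dμ(y)`.
Moreover, if `μ(B(y,r))/r^s → 0` as `r → 0` for `μ`-a.e. `y` and `μ(E) < ∞`, then the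
right-hand side integral tends to `0` as `ε → 0`. -/
theorem stmt5 (d : ℕ) (s c : ℝ) (hs : 0 < s) (hs1 : s < 1) (hc : 0 < c) :
    ∃ C : ℝ, 0 < C ∧
      ∀ μ : Measure (EuclideanSpace ℝ (Fin d)),
        (∀ (x : EuclideanSpace ℝ (Fin d)) (r : ℝ), 0 < r →
          μ (ball x r) ≤ ENNReal.ofReal (c * r ^ s)) →
        ∀ E : Set (EuclideanSpace ℝ (Fin d)), MeasurableSet E → Bornology.IsBounded E →
          (∀ ε : ℝ, 0 < ε →
            ∫⁻ x, ∫⁻ y in E ∩ {y | ε < dist y x},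
                μ (ball y ε) * ENNReal.ofReal (dist y x ^ (-(2 * s))) ∂μ ∂μ
              ≤ ENNReal.ofReal C *
                  ∫⁻ y in E, μ (ball y ε) * ENNReal.ofReal (ε ^ (-s)) ∂μ) ∧
          ((∀ᵐ y ∂μ, Tendsto (fun r : ℝ => μ (ball y r) / ENNReal.ofReal (r ^ s))
                (nhdsWithin 0 (Set.Ioi 0)) (nhds 0)) →
            μ E < ⊤ →
            Tendsto (fun ε : ℝ => ∫⁻ y in E, μ (ball y ε) * ENNReal.ofReal (ε ^ (-s)) ∂μ)
              (nhdsWithin 0 (Set.Ioi 0)) (nhds 0)) :=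
  stmt5_general d s c hs hc
end

section
/- Let 0 < s < 1 and let mu be a Radon measure on R^d. Let x in R^d and let (B_j)_{j=0}^{N} be an increasing sequence of concentric balls containing x, with r(B_j) = 2^{jm} r(B_0) for a fixed positive integer m. Suppose theta(B_j) >= theta0 > 0 for all j and mu(B_j \ B_{j-1}) >= mu(B_j)/2 for all 1 <= j <= N. Then the double integral over B_N x B_N of max(|x-y|, |x-z|, |y-z|)^{-2s} dmu(y) dmu(z) is at least c(s,d,m) * N * theta0^2. -/
open MeasureTheory Metric ENNReal

/-!
On `B_j × (B_j \ B_{j-1})` all three of `x, y, z` lie in `B_j`, so the kernel is at least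
`(2 r_j)^{-2s}`, while `μ(B_j) μ(B_j \ B_{j-1}) ≥ θ₀² r_j^{2s} / 2`; each such product set thus
contributes at least `2^{-2s} θ₀² / 2`, independently of `j`. The sets are pairwise disjoint
because the annuli `B_j \ B_{j-1}` are, so the `N` contributions add up inside `B_N × B_N`.
-/

/-- The average `s`-dimensional density `θ(B(x,r)) = μ(B(x,r))/r^s`. -/
noncomputable def thetaB {d : ℕ} (μ : Measure (EuclideanSpace ℝ (Fin d))) (s : ℝ)
    (x : EuclideanSpace ℝ (Fin d)) (r : ℝ) : ℝ :=
  (μ (ball x r)).toReal / r ^ s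

lemma two_mul_rpow_mul_mul_half {s r θ : ℝ} (hr : 0 < r) :
    (2 * r) ^ (-(2 * s)) * (θ * r ^ s * (θ * r ^ s / 2)) = 2 ^ (-(2 * s)) / 2 * θ ^ 2 := by
  have hcancel : r ^ (-(2 * s)) * (r ^ s * r ^ s) = 1 := by
    rw [← Real.rpow_add hr, ← Real.rpow_add hr, show -(2 * s) + (s + s) = 0 by ring,
      Real.rpow_zero]
  rw [Real.mul_rpow zero_le_two hr.le]
  linear_combination (2 ^ (-(2 * s)) * θ ^ 2 / 2 : ℝ) * hcancel

section MetricSpace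

variable {X : Type*} [MetricSpace X]

noncomputable def maxDistKernel (s : ℝ) (x : X) (p : X × X) : ℝ≥0∞ :=
  ENNReal.ofReal ((max (dist x p.1) (max (dist x p.2) (dist p.1 p.2))) ^ (-(2 * s)))

lemma max_dist_le_two_mul {x₀ x y z : X} {r : ℝ} (hx : x ∈ ball x₀ r) (hy : y ∈ ball x₀ r)
    (hz : z ∈ ball x₀ r) : max (dist x y) (max (dist x z) (dist y z)) ≤ 2 * r := by
  rw [mem_ball] at hx hy hz
  have hxy := dist_triangle_right x y x₀
  have hxz := dist_triangle_right x z x₀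
  have hyz := dist_triangle_right y z x₀
  simp only [max_le_iff]
  refine ⟨?_, ?_, ?_⟩ <;> linarith

lemma ofReal_two_mul_rpow_le_maxDistKernel {s : ℝ} (hs : 0 ≤ s) {x₀ x : X} {r r' : ℝ}
    (hx : x ∈ ball x₀ r) (hx' : x ∈ ball x₀ r') {p : X × X}
    (hp : p ∈ ball x₀ r ×ˢ (ball x₀ r \ ball x₀ r')) :
    ENNReal.ofReal ((2 * r) ^ (-(2 * s))) ≤ maxDistKernel s x p := by
  obtain ⟨hp₁, hp₂, hp₂'⟩ := hp
  have hxp₂ : x ≠ p.2 := by rintro rfl; exact hp₂' hx'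
  have hpos : 0 < max (dist x p.1) (max (dist x p.2) (dist p.1 p.2)) :=
    (dist_pos.2 hxp₂).trans_le ((le_max_left _ _).trans (le_max_right _ _))
  exact ENNReal.ofReal_le_ofReal <|
    Real.rpow_le_rpow_of_nonpos hpos (max_dist_le_two_mul hx hp₁ hp₂) (by linarith)

variable [MeasurableSpace X] [OpensMeasurableSpace X]

lemma ofReal_two_mul_rpow_mul_le_setLIntegral_maxDistKernel (μ : Measure X) [SFinite μ]
    {s : ℝ} (hs : 0 ≤ s) {x₀ x : X} {r r' : ℝ} (hx : x ∈ ball x₀ r) (hx' : x ∈ ball x₀ r') :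
    ENNReal.ofReal ((2 * r) ^ (-(2 * s))) * (μ (ball x₀ r) * μ (ball x₀ r \ ball x₀ r'))
      ≤ ∫⁻ p in ball x₀ r ×ˢ (ball x₀ r \ ball x₀ r'), maxDistKernel s x p ∂(μ.prod μ) := by
  rw [← Measure.prod_prod, ← setLIntegral_const]
  exact setLIntegral_mono' (measurableSet_ball.prod (measurableSet_ball.diff measurableSet_ball))
    fun p hp => ofReal_two_mul_rpow_le_maxDistKernel hs hx hx' hp

lemma le_setLIntegral_maxDistKernel_annulus (μ : Measure X) [SFinite μ] {s θ : ℝ} (hs : 0 ≤ s)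
    (hθ : 0 ≤ θ) {x₀ x : X} {r r' : ℝ} (hr : 0 < r) (hx : x ∈ ball x₀ r) (hx' : x ∈ ball x₀ r')
    (hmass : ENNReal.ofReal (θ * r ^ s) ≤ μ (ball x₀ r))
    (hhalf : μ (ball x₀ r) / 2 ≤ μ (ball x₀ r \ ball x₀ r')) :
    ENNReal.ofReal (2 ^ (-(2 * s)) / 2 * θ ^ 2)
      ≤ ∫⁻ p in ball x₀ r ×ˢ (ball x₀ r \ ball x₀ r'), maxDistKernel s x p ∂(μ.prod μ) := by
  have ha : 0 ≤ θ * r ^ s := by positivity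
  calc ENNReal.ofReal (2 ^ (-(2 * s)) / 2 * θ ^ 2)
      = ENNReal.ofReal ((2 * r) ^ (-(2 * s)))
          * (ENNReal.ofReal (θ * r ^ s) * (ENNReal.ofReal (θ * r ^ s) / 2)) := by
        rw [← two_mul_rpow_mul_mul_half hr, ENNReal.ofReal_mul (by positivity),
          ENNReal.ofReal_mul ha, ENNReal.ofReal_div_of_pos two_pos, ENNReal.ofReal_ofNat]
    _ ≤ ENNReal.ofReal ((2 * r) ^ (-(2 * s)))
          * (μ (ball x₀ r) * μ (ball x₀ r \ ball x₀ r')) := by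
        gcongr
        exact (ENNReal.div_le_div_right hmass 2).trans hhalf
    _ ≤ _ := ofReal_two_mul_rpow_mul_le_setLIntegral_maxDistKernel μ hs hx hx'

end MetricSpace

lemma ofReal_mul_rpow_le_of_le_thetaB {d : ℕ} {μ : Measure (EuclideanSpace ℝ (Fin d))} {s θ r : ℝ}
    {x₀ : EuclideanSpace ℝ (Fin d)} (hr : 0 < r) (h : θ ≤ thetaB μ s x₀ r) :
    ENNReal.ofReal (θ * r ^ s) ≤ μ (ball x₀ r) :=
  ENNReal.ofReal_le_of_le_toReal ((le_div_iff₀ (by positivity)).1 h)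

lemma sum_setLIntegral_prod_sdiff_le {α : Type*} [MeasurableSpace α] {ν : Measure α}
    {f : α × α → ℝ≥0∞} {B : ℕ → Set α} (hB : Monotone B) (hBm : ∀ j, MeasurableSet (B j))
    (N : ℕ) :
    ∑ j ∈ Finset.Icc 1 N, ∫⁻ p in B j ×ˢ (B j \ B (j - 1)), f p ∂(ν.prod ν)
      ≤ ∫⁻ p in B N ×ˢ B N, f p ∂(ν.prod ν) := by
  have hdisj : (↑(Finset.Icc 1 N) : Set ℕ).PairwiseDisjoint fun j => B j ×ˢ (B j \ B (j - 1)) := by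
    intro i hi j hj hij
    wlog hlt : i < j generalizing i j
    · exact (this hj hi hij.symm (hij.lt_or_gt.resolve_left hlt)).symm
    refine Set.disjoint_prod.2 (Or.inr (Set.disjoint_left.2 fun y hyi hyj => hyj.2 ?_))
    exact hB (Nat.le_sub_one_of_lt hlt) hyi.1
  rw [← lintegral_biUnion_finset hdisj fun j _ => (hBm j).prod ((hBm j).diff (hBm _))]
  refine lintegral_mono_set (Set.iUnion₂_subset fun j hj => ?_)
  have hjN := hB (Finset.mem_Icc.1 hj).2
  exact Set.prod_mono hjN (Set.sdiff_subset.trans hjN)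

theorem stmt11_general (d m : ℕ) (s : ℝ) (hs : 0 < s) :
    ∃ c : ℝ, 0 < c ∧
      ∀ μ : Measure (EuclideanSpace ℝ (Fin d)), SFinite μ →
        ∀ (x₀ x : EuclideanSpace ℝ (Fin d)) (r₀ : ℝ), 0 < r₀ → x ∈ ball x₀ r₀ →
          ∀ (N : ℕ) (θ₀ : ℝ), 0 < θ₀ →
            (∀ j : ℕ, j ≤ N → θ₀ ≤ thetaB μ s x₀ ((2 : ℝ) ^ (j * m) * r₀)) →
            (∀ j : ℕ, 1 ≤ j → j ≤ N →
              μ (ball x₀ ((2 : ℝ) ^ (j * m) * r₀)) / 2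
                ≤ μ (ball x₀ ((2 : ℝ) ^ (j * m) * r₀) \
                    ball x₀ ((2 : ℝ) ^ ((j - 1) * m) * r₀))) →
            ENNReal.ofReal (c * N * θ₀ ^ 2)
              ≤ ∫⁻ p in (ball x₀ ((2 : ℝ) ^ (N * m) * r₀)) ×ˢ
                    (ball x₀ ((2 : ℝ) ^ (N * m) * r₀)),
                  ENNReal.ofReal
                    ((max (dist x p.1) (max (dist x p.2) (dist p.1 p.2))) ^ (-(2 * s)))
                  ∂(μ.prod μ) := by
  refine ⟨2 ^ (-(2 * s)) / 2, by positivity, ?_⟩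
  intro μ _ x₀ x r₀ hr₀ hx N θ₀ hθ₀ hdens hhalf
  set R : ℕ → ℝ := fun j => (2 : ℝ) ^ (j * m) * r₀
  have hR : Monotone R := fun i j hij =>
    mul_le_mul_of_nonneg_right (pow_le_pow_right₀ one_le_two (Nat.mul_le_mul_right m hij)) hr₀.le
  have hxR : ∀ j, x ∈ ball x₀ (R j) := fun j =>
    ball_subset_ball (by simpa [R] using hR j.zero_le) hx
  calc ENNReal.ofReal (2 ^ (-(2 * s)) / 2 * N * θ₀ ^ 2)
      = ∑ _j ∈ Finset.Icc 1 N, ENNReal.ofReal (2 ^ (-(2 * s)) / 2 * θ₀ ^ 2) := by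
        rw [Finset.sum_const, Nat.card_Icc, Nat.add_sub_cancel, nsmul_eq_mul,
          ← ENNReal.ofReal_natCast, ← ENNReal.ofReal_mul N.cast_nonneg]
        ring_nf
    _ ≤ ∑ j ∈ Finset.Icc 1 N,
          ∫⁻ p in ball x₀ (R j) ×ˢ (ball x₀ (R j) \ ball x₀ (R (j - 1))), maxDistKernel s x p
            ∂(μ.prod μ) := by
        refine Finset.sum_le_sum fun j hj => ?_
        obtain ⟨hj1, hjN⟩ := Finset.mem_Icc.1 hj
        exact le_setLIntegral_maxDistKernel_annulus μ hs.le hθ₀.le (by positivity) (hxR j)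
          (hxR (j - 1)) (ofReal_mul_rpow_le_of_le_thetaB (by positivity) (hdens j hjN))
          (hhalf j hj1 hjN)
    _ ≤ _ := sum_setLIntegral_prod_sdiff_le (fun i j hij => ball_subset_ball (hR hij))
        (fun _ => measurableSet_ball) N

/-- Given concentric balls `B_j` of radii `2^{jm} r₀` containing `x`, with densities
`θ(B_j) ≥ θ₀` and `μ(B_j \ B_{j-1}) ≥ μ(B_j)/2`, the double integral of
`max(|x-y|,|x-z|,|y-z|)^{-2s}` over `B_N × B_N` is at least `c(s,d,m) N θ₀²`. -/
theorem stmt11 (d m : ℕ) (s : ℝ) (hs : 0 < s) (hs1 : s < 1) (hm : 0 < m) :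
    ∃ c : ℝ, 0 < c ∧
      ∀ μ : Measure (EuclideanSpace ℝ (Fin d)), SFinite μ →
        ∀ (x₀ x : EuclideanSpace ℝ (Fin d)) (r₀ : ℝ), 0 < r₀ → x ∈ ball x₀ r₀ →
          ∀ (N : ℕ) (θ₀ : ℝ), 0 < θ₀ →
            (∀ j : ℕ, j ≤ N → θ₀ ≤ thetaB μ s x₀ ((2 : ℝ) ^ (j * m) * r₀)) →
            (∀ j : ℕ, 1 ≤ j → j ≤ N →
              μ (ball x₀ ((2 : ℝ) ^ (j * m) * r₀)) / 2
                ≤ μ (ball x₀ ((2 : ℝ) ^ (j * m) * r₀) \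
                    ball x₀ ((2 : ℝ) ^ ((j - 1) * m) * r₀))) →
            ENNReal.ofReal (c * N * θ₀ ^ 2)
              ≤ ∫⁻ p in (ball x₀ ((2 : ℝ) ^ (N * m) * r₀)) ×ˢ
                    (ball x₀ ((2 : ℝ) ^ (N * m) * r₀)),
                  ENNReal.ofReal
                    ((max (dist x p.1) (max (dist x p.2) (dist p.1 p.2))) ^ (-(2 * s)))
                  ∂(μ.prod μ) :=
  stmt11_general d m s hs
end
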